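/- Let N ≥ 1, M > 0, x, y ∈ ℝ^N with all components in [0, M], let 0 < δ < M, let F : K_x → K_y satisfy |d²(p,q) − d²(F(p), F(q))| ≤ 2δ for all p, q ∈ K_x, and let σ : {1,…,N} → {1,…,N} be an injective map satisfying F(□(n)) ⊆ □(σ(n)) for all n. Then |σ(n) − σ(m)| = 1 for all n, m ∈ {1,…,N} with |n − m| = 1. -/

import Mathlib

/-!
The centres of the boxes `□(n)` and `□(m)` of adjacent indices are `10M` apart, so their images
under `F` are at most `10M + 2δ < 12M` apart. Points of two boxes whose indices differ by at
least `2` are at least `18M` apart horizontally, hence `|σ n - σ m| ≤ 1`, and injectivity of `σ`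
excludes `0`.
-/

noncomputable def box (M : ℝ) (n : ℕ) : Set (ℝ × ℝ) :=
  Set.Icc (4 * M + 10 * M * (n : ℝ)) (4 * M + 10 * M * (n : ℝ) + 2 * M) ×ˢ Set.Icc (-M) M

noncomputable def pp {N : ℕ} (M : ℝ) (z : Fin N → ℝ) (n : Fin N) : ℝ × ℝ :=
  (10 * M * ((n : ℕ) : ℝ), z n)

noncomputable def pm {N : ℕ} (M : ℝ) (z : Fin N → ℝ) (n : Fin N) : ℝ × ℝ :=
  (10 * M * ((n : ℕ) : ℝ), -(z n))

noncomputable def Kset {N : ℕ} (M : ℝ) (z : Fin N → ℝ) : Set (ℝ × ℝ) :=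
  ⋃ n : Fin N, ({pp M z n, pm M z n} ∪ box M n)

theorem pp_mem {N : ℕ} (M : ℝ) (z : Fin N → ℝ) (n : Fin N) : pp M z n ∈ Kset M z :=
  Set.mem_iUnion.mpr ⟨n, Or.inl (Set.mem_insert _ _)⟩

theorem pm_mem {N : ℕ} (M : ℝ) (z : Fin N → ℝ) (n : Fin N) : pm M z n ∈ Kset M z :=
  Set.mem_iUnion.mpr ⟨n, Or.inl (Set.mem_insert_of_mem _ rfl)⟩

theorem Kset_compact {N : ℕ} (M : ℝ) (z : Fin N → ℝ) : IsCompact (Kset M z) := by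
  apply isCompact_iUnion
  intro n
  exact ((Set.toFinite _).isCompact).union (isCompact_Icc.prod isCompact_Icc)

instance {N : ℕ} (M : ℝ) (z : Fin N → ℝ) : CompactSpace ↥(Kset M z) :=
  isCompact_iff_compactSpace.mp (Kset_compact M z)

theorem Kset_nonempty {N : ℕ} (hN : 0 < N) (M : ℝ) (z : Fin N → ℝ) : (Kset M z).Nonempty :=
  ⟨pp M z ⟨0, hN⟩, pp_mem M z ⟨0, hN⟩⟩


noncomputable def boxCenter (M : ℝ) (k : ℕ) : ℝ × ℝ :=
  (5 * M + 10 * M * k, 0)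

section

variable {M : ℝ}

theorem boxCenter_mem_box (hM : 0 ≤ M) (k : ℕ) : boxCenter M k ∈ box M k := by
  simp only [boxCenter, box, Set.mem_prod, Set.mem_Icc]
  refine ⟨⟨?_, ?_⟩, ?_, ?_⟩ <;> linarith

theorem boxCenter_mem_Kset (hM : 0 ≤ M) {N : ℕ} (z : Fin N → ℝ) (k : Fin N) :
    boxCenter M k ∈ Kset M z :=
  Set.mem_iUnion.mpr ⟨k, Or.inr (boxCenter_mem_box hM k)⟩

theorem dist_boxCenter (hM : 0 ≤ M) (i j : ℕ) :
    dist (boxCenter M i) (boxCenter M j) = 10 * M * |(i : ℝ) - j| := by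
  have hfst : 5 * M + 10 * M * i - (5 * M + 10 * M * j) = 10 * M * ((i : ℝ) - j) := by ring
  simp only [boxCenter, Prod.dist_eq, Real.dist_eq, hfst, abs_mul, sub_self, abs_zero,
    abs_of_nonneg (by positivity : (0 : ℝ) ≤ 10 * M)]
  exact max_eq_left (by positivity)

theorem le_dist_of_mem_box {i j : ℕ} {p q : ℝ × ℝ} (hp : p ∈ box M i) (hq : q ∈ box M j) :
    10 * M * |(i : ℝ) - j| - 2 * M ≤ dist p q := by
  obtain ⟨⟨hp₁, hp₁'⟩, hp₂, hp₂'⟩ := hp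
  obtain ⟨⟨hq₁, hq₁'⟩, -⟩ := hq
  have hM : 0 ≤ M := by linarith
  have hfst : |p.1 - q.1| ≤ dist p q := by
    rw [← Real.dist_eq]; exact le_max_left _ _
  have hrest : |(p.1 - (4 * M + 10 * M * i)) - (q.1 - (4 * M + 10 * M * j))| ≤ 2 * M :=
    abs_le.mpr ⟨by linarith, by linarith⟩
  have hgap : 10 * M * |(i : ℝ) - j| ≤ |p.1 - q.1| + 2 * M :=
    calc 10 * M * |(i : ℝ) - j|
        = |10 * M * ((i : ℝ) - j)| := by
          rw [abs_mul, abs_of_nonneg (by positivity : (0 : ℝ) ≤ 10 * M)]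
      _ = |(p.1 - q.1) - ((p.1 - (4 * M + 10 * M * i)) - (q.1 - (4 * M + 10 * M * j)))| := by
          congr 1; ring
      _ ≤ |p.1 - q.1| + |(p.1 - (4 * M + 10 * M * i)) - (q.1 - (4 * M + 10 * M * j))| :=
          abs_sub _ _
      _ ≤ |p.1 - q.1| + 2 * M := by linarith
  linarith

end

theorem step5_sigma_adjacent_general {N : ℕ} {M : ℝ} (hM : 0 < M)
    (x y : Fin N → ℝ)
    {δ : ℝ} (hδM : δ < M)
    (F : ↥(Kset M x) → ↥(Kset M y))
    (hF : ∀ p q : ↥(Kset M x), |dist p q - dist (F p) (F q)| ≤ 2 * δ)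
    (σ : Fin N → Fin N) (hσinj : Function.Injective σ)
    (hσ : ∀ n : Fin N, ∀ p : ↥(Kset M x),
      (p : ℝ × ℝ) ∈ box M n → (F p : ℝ × ℝ) ∈ box M (σ n)) :
    ∀ n m : Fin N, |((n : ℕ) : ℤ) - ((m : ℕ) : ℤ)| = 1 →
      |((σ n : ℕ) : ℤ) - ((σ m : ℕ) : ℤ)| = 1 := by
  intro n m hnm
  let P : ↥(Kset M x) := ⟨boxCenter M n, boxCenter_mem_Kset hM.le x n⟩
  let Q : ↥(Kset M x) := ⟨boxCenter M m, boxCenter_mem_Kset hM.le x m⟩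
  have hPQ : dist P Q = 10 * M := by
    have hnm' : |((n : ℕ) : ℝ) - (m : ℕ)| = 1 := by exact_mod_cast hnm
    rw [Subtype.dist_eq, dist_boxCenter hM.le, hnm', mul_one]
  have hFPQ : dist (F P) (F Q) ≤ 10 * M + 2 * δ := by
    linarith [(abs_le.mp (hF P Q)).1]
  have hsep := le_dist_of_mem_box (hσ n P (boxCenter_mem_box hM.le n))
    (hσ m Q (boxCenter_mem_box hM.le m))
  have hlt : |((σ n : ℕ) : ℤ) - ((σ m : ℕ) : ℤ)| < 2 := by
    rw [Subtype.dist_eq] at hFPQ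
    have h : 10 * M * |((σ n : ℕ) : ℝ) - (σ m : ℕ)| < 10 * M * 2 := by linarith
    exact_mod_cast lt_of_mul_lt_mul_left h (by positivity)
  have hne : ((σ n : ℕ) : ℤ) ≠ (σ m : ℕ) := by
    intro h
    obtain rfl : n = m := hσinj (Fin.ext (by exact_mod_cast h))
    simp at hnm
  rw [abs_lt] at hlt
  rw [abs_eq zero_le_one]
  omega

/-- Step 5: σ maps adjacent indices to adjacent indices. -/
theorem step5_sigma_adjacent {N : ℕ} (hN : 0 < N) {M : ℝ} (hM : 0 < M)
    (x y : Fin N → ℝ) (hx : ∀ n, x n ∈ Set.Icc (0 : ℝ) M) (hy : ∀ n, y n ∈ Set.Icc (0 : ℝ) M)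
    {δ : ℝ} (hδ0 : 0 < δ) (hδM : δ < M)
    (F : ↥(Kset M x) → ↥(Kset M y))
    (hF : ∀ p q : ↥(Kset M x), |dist p q - dist (F p) (F q)| ≤ 2 * δ)
    (σ : Fin N → Fin N) (hσinj : Function.Injective σ)
    (hσ : ∀ n : Fin N, ∀ p : ↥(Kset M x),
      (p : ℝ × ℝ) ∈ box M n → (F p : ℝ × ℝ) ∈ box M (σ n)) :
    ∀ n m : Fin N, |((n : ℕ) : ℤ) - ((m : ℕ) : ℤ)| = 1 →
      |((σ n : ℕ) : ℤ) - ((σ m : ℕ) : ℤ)| = 1 :=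
  step5_sigma_adjacent_general hM x y hδM F hF σ hσinj hσ
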